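/- Let f : ℝ → ℝ be five times continuously differentiable on a neighborhood of α with f(α) = 0 and f'(α) ≠ 0 (α is a simple zero of f). Let p : ℝ → ℝ be twice continuously differentiable near 0 with p(0) = 1 and p'(0) = 2. For x near α with f(x) ≠ 0 and f'(x) ≠ 0 define y = x − f(x)/f'(x), u = f(y)/f(x), and Φ(x) = y − p(u)·f(y)/f'(x). Then there exist δ > 0 and C > 0 such that for every x with 0 < |x − α| < δ for which f(x) and f'(x) are nonzero, one has |Φ(x) − α| ≤ C·|x − α|^4. -/

import Mathlib

open Filter Topology Asymptotics Set

private lemma mvt_step {g g' : ℝ → ℝ} {α δ M : ℝ} (k : ℕ) (hM : 0 ≤ M)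
    (hder : ∀ t, |t - α| < δ → HasDerivAt g (g' t) t)
    (hbd : ∀ t, |t - α| < δ → |g' t| ≤ M * |t - α| ^ k)
    (hg0 : g α = 0) :
    ∀ z, |z - α| < δ → |g z| ≤ M * |z - α| ^ (k + 1) := by
  intro z hz
  have key : ∀ t ∈ Set.uIcc α z, |t - α| ≤ |z - α| := by
    intro t ht
    rcases Set.mem_uIcc.1 ht with ⟨h1, h2⟩ | ⟨h1, h2⟩
    · rw [abs_of_nonneg (by linarith), abs_of_nonneg (by linarith)]; linarith
    · rw [abs_of_nonpos (by linarith), abs_of_nonpos (by linarith)]; linarith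
  have hmem : ∀ t ∈ Set.uIcc α z, |t - α| < δ := fun t ht => lt_of_le_of_lt (key t ht) hz
  have H := Convex.norm_image_sub_le_of_norm_hasDerivWithin_le
    (f := g) (f' := g') (s := Set.uIcc α z) (C := M * |z - α| ^ k)
    (fun t ht => (hder t (hmem t ht)).hasDerivWithinAt)
    (fun t ht => by
      rw [Real.norm_eq_abs]
      exact le_trans (hbd t (hmem t ht))
        (mul_le_mul_of_nonneg_left (pow_le_pow_left₀ (abs_nonneg _) (key t ht) k) hM))
    (convex_uIcc α z) Set.left_mem_uIcc Set.right_mem_uIcc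
  rw [hg0, sub_zero, Real.norm_eq_abs, Real.norm_eq_abs] at H
  calc |g z| ≤ M * |z - α| ^ k * |z - α| := H
    _ = M * |z - α| ^ (k + 1) := by ring

private noncomputable def yN (f : ℝ → ℝ) (x : ℝ) : ℝ := x - f x / deriv f x
private noncomputable def uN (f : ℝ → ℝ) (x : ℝ) : ℝ := f (yN f x) / f x

private lemma aux_bigO (f p : ℝ → ℝ) (α a1 a2 M δA Mp δp : ℝ)
    (ha1 : a1 ≠ 0) (hM : 0 ≤ M) (hδA : 0 < δA) (hMp : 0 ≤ Mp) (hδp : 0 < δp)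
    (hA0 : ∀ z, |z - α| < δA → |f z - a1 * (z - α) - a2 * (z - α) ^ 2| ≤ M * |z - α| ^ 3)
    (hA1 : ∀ z, |z - α| < δA → |deriv f z - a1 - 2 * a2 * (z - α)| ≤ M * |z - α| ^ 2)
    (hP : ∀ w, |w| < δp → |p w - 1 - 2 * w| ≤ Mp * |w| ^ 2) :
    (fun x => yN f x - p (uN f x) * f (yN f x) / deriv f x - α)
      =O[𝓝[≠] α] (fun x => (x - α) ^ 4) := by
  set l : Filter ℝ := 𝓝[≠] α with hl
  have ha1' : (0:ℝ) < |a1| := abs_pos.2 ha1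
  have ev_ne : ∀ᶠ x in l, x ≠ α := by
    filter_upwards [eventually_mem_nhdsWithin] with x hx
    simpa using hx
  have evδ : ∀ d : ℝ, 0 < d → ∀ᶠ x in l, |x - α| < d := by
    intro d hd
    have h : ∀ᶠ x in 𝓝 α, |x - α| < d := by
      rw [Metric.eventually_nhds_iff]
      exact ⟨d, hd, fun x hx => by simpa [Real.dist_eq] using hx⟩
    exact h.filter_mono nhdsWithin_le_nhds
  have hpow : ∀ i j : ℕ, i ≤ j →
      (fun x => (x - α) ^ j) =O[l] (fun x => (x - α) ^ i) := by
    intro i j hij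
    rw [isBigO_iff]
    refine ⟨1, ?_⟩
    filter_upwards [evδ 1 one_pos] with x hx
    rw [one_mul, Real.norm_eq_abs, Real.norm_eq_abs, abs_pow, abs_pow]
    exact pow_le_pow_of_le_one (abs_nonneg _) hx.le hij
  have getB : ∀ {F G : ℝ → ℝ}, F =O[l] G →
      ∃ c : ℝ, 0 < c ∧ ∀ᶠ x in l, |F x| ≤ c * |G x| := by
    intro F G h
    obtain ⟨c, hc⟩ := h.bound
    refine ⟨|c| + 1, by positivity, ?_⟩
    filter_upwards [hc] with x hx
    rw [Real.norm_eq_abs, Real.norm_eq_abs] at hx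
    exact hx.trans (mul_le_mul_of_nonneg_right
      (by linarith [le_abs_self c]) (abs_nonneg _))
  -- Taylor facts as big-O statements
  have O_f : (fun x => f x - a1 * (x - α) - a2 * (x - α) ^ 2) =O[l]
      (fun x => (x - α) ^ 3) := by
    rw [isBigO_iff]
    refine ⟨M, ?_⟩
    filter_upwards [evδ δA hδA] with x hx
    simpa [Real.norm_eq_abs, abs_pow] using hA0 x hx
  have O_f1 : (fun x => deriv f x - a1 - 2 * a2 * (x - α)) =O[l]
      (fun x => (x - α) ^ 2) := by
    rw [isBigO_iff]
    refine ⟨M, ?_⟩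
    filter_upwards [evδ δA hδA] with x hx
    simpa [Real.norm_eq_abs, abs_pow] using hA1 x hx
  have O_E2 : (fun x => a2 * (x - α) ^ 2) =O[l] (fun x => (x - α) ^ 2) :=
    (isBigO_refl _ _).const_mul_left a2
  have O_fa : (fun x => f x - a1 * (x - α)) =O[l] (fun x => (x - α) ^ 2) :=
    ((O_f.trans (hpow 2 3 (by norm_num))).add O_E2).congr (fun x => by ring) fun x => rfl
  have O_E1 : (fun x => x - α) =O[l] (fun x => (x - α) ^ 1) :=
    (isBigO_refl _ _).congr (fun _ => rfl) fun x => (pow_one _).symm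
  have O_fE : (fun x => f x) =O[l] (fun x => (x - α) ^ 1) :=
    ((O_fa.trans (hpow 1 2 one_le_two)).add
      (O_E1.const_mul_left a1)).congr (fun x => by ring) fun x => rfl
  have O_f1a : (fun x => deriv f x - a1) =O[l] (fun x => (x - α) ^ 1) :=
    ((O_f1.trans (hpow 1 2 one_le_two)).add
      (O_E1.const_mul_left (2 * a2))).congr
      (fun x => by ring) fun x => rfl
  -- lower bound for deriv f
  obtain ⟨c1, hc1pos, hc1⟩ := getB O_f1a
  have ev_f1 : ∀ᶠ x in l, |a1| / 2 ≤ |deriv f x| ∧ deriv f x ≠ 0 := by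
    filter_upwards [hc1, evδ (|a1| / (2 * c1)) (by positivity)] with x h1 h2
    rw [abs_pow, pow_one] at h1
    have habs : |deriv f x - a1| ≤ |a1| / 2 := by
      refine h1.trans ?_
      calc c1 * |x - α| ≤ c1 * (|a1| / (2 * c1)) :=
            mul_le_mul_of_nonneg_left h2.le hc1pos.le
        _ = |a1| / 2 := by field_simp
    have h3 : |a1| / 2 ≤ |deriv f x| := by
      have h4 : |a1| - |deriv f x| ≤ |a1 - deriv f x| := abs_sub_abs_le_abs_sub _ _
      rw [abs_sub_comm] at habs
      linarith
    refine ⟨h3, fun h0 => ?_⟩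
    rw [h0, abs_zero] at h3
    linarith
  have ev_inv1 : ∀ᶠ x in l, |(deriv f x)⁻¹| ≤ 2 / |a1| := by
    filter_upwards [ev_f1] with x hx
    obtain ⟨h1, _⟩ := hx
    rw [abs_inv]
    calc |deriv f x|⁻¹ = 1 / |deriv f x| := (one_div _).symm
      _ ≤ 1 / (|a1| / 2) := one_div_le_one_div_of_le (by positivity) h1
      _ = 2 / |a1| := one_div_div _ _
  have O_inv1 : (fun x => (deriv f x)⁻¹) =O[l] (fun _ => (1 : ℝ)) := by
    rw [isBigO_iff]
    refine ⟨2 / |a1|, ?_⟩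
    filter_upwards [ev_inv1] with x hx
    rw [Real.norm_eq_abs, norm_one, mul_one]
    exact hx
  have O_inv1' : (fun x => (deriv f x)⁻¹ - a1⁻¹) =O[l] (fun x => (x - α) ^ 1) := by
    rw [isBigO_iff]
    refine ⟨c1 * (2 / |a1|) * |a1|⁻¹, ?_⟩
    filter_upwards [hc1, ev_f1, ev_inv1] with x h1 h2 h3
    obtain ⟨h2a, h2b⟩ := h2
    rw [abs_pow, pow_one] at h1
    have key : (deriv f x)⁻¹ - a1⁻¹ = (a1 - deriv f x) * (deriv f x)⁻¹ * a1⁻¹ := by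
      field_simp
    rw [Real.norm_eq_abs, Real.norm_eq_abs, key, abs_mul, abs_mul, abs_pow, pow_one]
    have e1 : |a1 - deriv f x| ≤ c1 * |x - α| := by rw [abs_sub_comm]; exact h1
    calc |a1 - deriv f x| * |(deriv f x)⁻¹| * |a1⁻¹|
        ≤ (c1 * |x - α|) * (2 / |a1|) * |a1⁻¹| := by
          refine mul_le_mul_of_nonneg_right ?_ (abs_nonneg _)
          exact mul_le_mul e1 h3 (abs_nonneg _) (by positivity)
      _ = c1 * (2 / |a1|) * |a1|⁻¹ * |x - α| := by rw [abs_inv]; ring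
  -- lower bound for f
  obtain ⟨c2, hc2pos, hc2⟩ := getB O_fa
  have ev_flb : ∀ᶠ x in l, |a1| / 2 * |x - α| ≤ |f x| ∧ f x ≠ 0 := by
    filter_upwards [hc2, evδ (|a1| / (2 * c2)) (by positivity), ev_ne] with x h1 h2 h3
    rw [abs_pow] at h1
    have hE : 0 < |x - α| := abs_pos.2 (sub_ne_zero.2 h3)
    have h4 : |a1 * (x - α)| - |f x| ≤ |a1 * (x - α) - f x| := abs_sub_abs_le_abs_sub _ _
    rw [abs_sub_comm, abs_mul] at h4
    have h5 : |f x - a1 * (x - α)| ≤ c2 * |x - α| ^ 2 := h1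
    have h6 : c2 * |x - α| ^ 2 ≤ |a1| / 2 * |x - α| := by
      have : c2 * |x - α| ≤ |a1| / 2 := by
        calc c2 * |x - α| ≤ c2 * (|a1| / (2 * c2)) := mul_le_mul_of_nonneg_left h2.le hc2pos.le
          _ = |a1| / 2 := by field_simp
      nlinarith
    have h7 : |a1| / 2 * |x - α| ≤ |f x| := by nlinarith
    refine ⟨h7, fun h0 => ?_⟩
    rw [h0, abs_zero] at h7
    nlinarith
  have O_inv2 : (fun x => (f x)⁻¹) =O[l] (fun x => (x - α)⁻¹) := by
    rw [isBigO_iff]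
    refine ⟨2 / |a1|, ?_⟩
    filter_upwards [ev_flb, ev_ne] with x hx h3
    obtain ⟨h1, _⟩ := hx
    have hE : 0 < |x - α| := abs_pos.2 (sub_ne_zero.2 h3)
    rw [Real.norm_eq_abs, Real.norm_eq_abs, abs_inv, abs_inv]
    have h4 : (0:ℝ) < |a1| / 2 * |x - α| := by positivity
    calc |f x|⁻¹ ≤ (|a1| / 2 * |x - α|)⁻¹ := by
          exact inv_anti₀ h4 h1
      _ = 2 / |a1| * |x - α|⁻¹ := by
          rw [mul_inv]
          congr 1
          rw [← one_div, one_div_div]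
  -- Newton step expansion
  have O_D2 : (fun x => ((x - α) * deriv f x - f x) - a2 * (x - α) ^ 2) =O[l]
      (fun x => (x - α) ^ 3) := by
    have t1 : (fun x => (x - α) * (deriv f x - a1 - 2 * a2 * (x - α))) =O[l]
        (fun x => (x - α) ^ 3) :=
      ((isBigO_refl (fun x => x - α) l).mul O_f1).congr (fun _ => rfl) fun x => by ring
    exact (t1.sub O_f).congr (fun x => by ring) fun _ => rfl
  have O_D : (fun x => (x - α) * deriv f x - f x) =O[l] (fun x => (x - α) ^ 2) :=
    ((O_D2.trans (hpow 2 3 (by norm_num))).add O_E2).congr (fun x => by ring) fun _ => rfl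
  have ev_yeq : ∀ᶠ x in l, yN f x - α = ((x - α) * deriv f x - f x) * (deriv f x)⁻¹ := by
    filter_upwards [ev_f1] with x hx
    obtain ⟨_, h2⟩ := hx
    simp only [yN]
    field_simp
    ring
  have O_Ey : (fun x => yN f x - α) =O[l] (fun x => (x - α) ^ 2) :=
    ((O_D.mul O_inv1).congr (fun _ => rfl) (fun x => by ring)).congr'
      (ev_yeq.mono fun x h => h.symm) EventuallyEq.rfl
  have ht2 : (fun x => (yN f x - α) - a2 / a1 * (x - α) ^ 2) =O[l]
      (fun x => (x - α) ^ 3) := by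
    have base : (fun x => (((x - α) * deriv f x - f x) - a2 * (x - α) ^ 2) * (deriv f x)⁻¹
        + a2 * (x - α) ^ 2 * ((deriv f x)⁻¹ - a1⁻¹)) =O[l] (fun x => (x - α) ^ 3) :=
      ((O_D2.mul O_inv1).congr (fun _ => rfl) (fun x => by ring)).add
        ((O_E2.mul O_inv1').congr (fun _ => rfl) (fun x => by ring))
    refine base.congr' ?_ EventuallyEq.rfl
    filter_upwards [ev_yeq, ev_f1] with x h1 h2
    obtain ⟨_, h2b⟩ := h2
    rw [h1]
    field_simp
    ring
  obtain ⟨c3, hc3pos, hc3⟩ := getB O_Ey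
  have hc3' : ∀ᶠ x in l, |yN f x - α| ≤ c3 * |x - α| ^ 2 := by
    filter_upwards [hc3] with x hx
    rwa [abs_pow] at hx
  have ev_yA : ∀ᶠ x in l, |yN f x - α| < δA := by
    filter_upwards [hc3', evδ (min 1 (δA / c3)) (lt_min one_pos (by positivity))] with x h1 h2
    have h2a : |x - α| < 1 := lt_of_lt_of_le h2 (min_le_left _ _)
    have h2b : |x - α| < δA / c3 := lt_of_lt_of_le h2 (min_le_right _ _)
    calc |yN f x - α| ≤ c3 * |x - α| ^ 2 := h1
      _ ≤ c3 * |x - α| := by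
          refine mul_le_mul_of_nonneg_left ?_ hc3pos.le
          nlinarith [abs_nonneg (x - α)]
      _ < c3 * (δA / c3) := mul_lt_mul_of_pos_left h2b hc3pos
      _ = δA := by field_simp
  have O_ry : (fun x => f (yN f x) - a1 * (yN f x - α) - a2 * (yN f x - α) ^ 2) =O[l]
      (fun x => (x - α) ^ 4) := by
    rw [isBigO_iff]
    refine ⟨M * c3 ^ 3, ?_⟩
    filter_upwards [ev_yA, hc3', evδ 1 one_pos] with x h1 h2 h3
    have h4 := hA0 (yN f x) h1
    rw [Real.norm_eq_abs, Real.norm_eq_abs, abs_pow]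
    have h5 : |yN f x - α| ^ 3 ≤ (c3 * |x - α| ^ 2) ^ 3 :=
      pow_le_pow_left₀ (abs_nonneg _) h2 3
    have h7 : |x - α| ^ 6 ≤ |x - α| ^ 4 :=
      pow_le_pow_of_le_one (abs_nonneg _) h3.le (by norm_num)
    calc |f (yN f x) - a1 * (yN f x - α) - a2 * (yN f x - α) ^ 2|
        ≤ M * |yN f x - α| ^ 3 := h4
      _ ≤ M * (c3 ^ 3 * |x - α| ^ 6) := by
          refine mul_le_mul_of_nonneg_left ?_ hM
          calc |yN f x - α| ^ 3 ≤ (c3 * |x - α| ^ 2) ^ 3 := h5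
            _ = c3 ^ 3 * |x - α| ^ 6 := by ring
      _ ≤ M * (c3 ^ 3 * |x - α| ^ 4) := by
          refine mul_le_mul_of_nonneg_left ?_ hM
          exact mul_le_mul_of_nonneg_left h7 (by positivity)
      _ = M * c3 ^ 3 * |x - α| ^ 4 := by ring
  have O_t2 : (fun x => (yN f x - α) ^ 2) =O[l] (fun x => (x - α) ^ 4) :=
    (O_Ey.mul O_Ey).congr (fun x => by ring) fun x => by ring
  have O_s : (fun x => f (yN f x) - a1 * (yN f x - α)) =O[l] (fun x => (x - α) ^ 4) :=
    (O_ry.add (O_t2.const_mul_left a2)).congr (fun x => by ring) fun _ => rfl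
  have O_fy : (fun x => f (yN f x)) =O[l] (fun x => (x - α) ^ 2) :=
    ((O_s.trans (hpow 2 4 (by norm_num))).add (O_Ey.const_mul_left a1)).congr
      (fun x => by ring) fun _ => rfl
  have O_u : (fun x => uN f x) =O[l] (fun x => (x - α) ^ 1) := by
    refine (O_fy.mul O_inv2).congr' ?_ ?_
    · exact Filter.Eventually.of_forall fun x => by
        simp only [uN, div_eq_mul_inv]
    · filter_upwards [ev_ne] with x hx
      have h : x - α ≠ 0 := sub_ne_zero.2 hx
      field_simp
  obtain ⟨c4, hc4pos, hc4⟩ := getB O_u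
  have hc4' : ∀ᶠ x in l, |uN f x| ≤ c4 * |x - α| := by
    filter_upwards [hc4] with x hx
    rwa [abs_pow, pow_one] at hx
  have ev_u : ∀ᶠ x in l, |uN f x| < δp := by
    filter_upwards [hc4', evδ (δp / c4) (div_pos hδp hc4pos)] with x h1 h2
    calc |uN f x| ≤ c4 * |x - α| := h1
      _ < c4 * (δp / c4) := mul_lt_mul_of_pos_left h2 hc4pos
      _ = δp := by field_simp
  have O_pu : (fun x => p (uN f x) - 1 - 2 * uN f x) =O[l] (fun x => (x - α) ^ 2) := by
    rw [isBigO_iff]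
    refine ⟨Mp * c4 ^ 2, ?_⟩
    filter_upwards [ev_u, hc4'] with x h1 h2
    rw [Real.norm_eq_abs, Real.norm_eq_abs, abs_pow]
    calc |p (uN f x) - 1 - 2 * uN f x| ≤ Mp * |uN f x| ^ 2 := hP _ h1
      _ ≤ Mp * (c4 * |x - α|) ^ 2 := by
          refine mul_le_mul_of_nonneg_left ?_ hMp
          exact pow_le_pow_left₀ (abs_nonneg _) h2 2
      _ = Mp * c4 ^ 2 * |x - α| ^ 2 := by ring
  -- the key cubic-order quantity J
  have O_J : (fun x => f x * (deriv f x - a1) - 2 * a1 ^ 2 * (yN f x - α)) =O[l]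
      (fun x => (x - α) ^ 3) := by
    have T1 : (fun x => (f x - a1 * (x - α)) * (deriv f x - a1)) =O[l]
        (fun x => (x - α) ^ 3) :=
      (O_fa.mul O_f1a).congr (fun _ => rfl) fun x => by ring
    have T2 : (fun x => a1 * (x - α) * (deriv f x - a1 - 2 * a2 * (x - α))) =O[l]
        (fun x => (x - α) ^ 3) :=
      ((O_E1.const_mul_left a1).mul O_f1).congr (fun _ => rfl) fun x => by ring
    have T3 : (fun x => 2 * a1 ^ 2 * ((yN f x - α) - a2 / a1 * (x - α) ^ 2)) =O[l]
        (fun x => (x - α) ^ 3) := ht2.const_mul_left _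
    exact ((T1.add T2).sub T3).congr (fun x => by field_simp; ring) fun _ => rfl
  have ev_tf1 : ∀ᶠ x in l, (yN f x - α) * deriv f x = (x - α) * deriv f x - f x := by
    filter_upwards [ev_yeq, ev_f1] with x h1 h2
    obtain ⟨_, hne⟩ := h2
    rw [h1]
    field_simp
  -- the quintic-order quantity G
  have O_G : (fun x => f x * (((x - α) * deriv f x - f x) - f (yN f x))
      - 2 * (f (yN f x)) ^ 2) =O[l] (fun x => (x - α) ^ 5) := by
    have T1 : (fun x => (yN f x - α) * (f x * (deriv f x - a1)
        - 2 * a1 ^ 2 * (yN f x - α))) =O[l] (fun x => (x - α) ^ 5) :=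
      (O_Ey.mul O_J).congr (fun _ => rfl) fun x => by ring
    have T2 : (fun x => f x * (f (yN f x) - a1 * (yN f x - α))) =O[l]
        (fun x => (x - α) ^ 5) :=
      (O_fE.mul O_s).congr (fun _ => rfl) fun x => by ring
    have T3 : (fun x => 2 * ((f (yN f x) + a1 * (yN f x - α))
        * (f (yN f x) - a1 * (yN f x - α)))) =O[l] (fun x => (x - α) ^ 5) := by
      have hsum : (fun x => f (yN f x) + a1 * (yN f x - α)) =O[l]
          (fun x => (x - α) ^ 2) := O_fy.add (O_Ey.const_mul_left a1)
      exact ((((hsum.mul O_s).congr (fun _ => rfl) fun x => by ring).trans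
        (hpow 5 6 (by norm_num))).const_mul_left 2)
    refine ((T1.sub T2).sub T3).congr' ?_ EventuallyEq.rfl
    filter_upwards [ev_tf1] with x h
    rw [← h]
    ring
  have O_W : (fun x => ((x - α) * deriv f x - f x) - f (yN f x)
      - 2 * (f (yN f x)) ^ 2 * (f x)⁻¹) =O[l] (fun x => (x - α) ^ 4) := by
    refine (O_G.mul O_inv2).congr' ?_ ?_
    · filter_upwards [ev_flb] with x hx
      obtain ⟨_, hne⟩ := hx
      field_simp
    · filter_upwards [ev_ne] with x hx
      have h : x - α ≠ 0 := sub_ne_zero.2 hx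
      rw [show (x - α) ^ 5 = (x - α) ^ 4 * (x - α) by ring, mul_inv_cancel_right₀ h]
  have O_N : (fun x => ((x - α) * deriv f x - f x) - p (uN f x) * f (yN f x)) =O[l]
      (fun x => (x - α) ^ 4) := by
    have T : (fun x => (p (uN f x) - 1 - 2 * uN f x) * f (yN f x)) =O[l]
        (fun x => (x - α) ^ 4) :=
      (O_pu.mul O_fy).congr (fun _ => rfl) fun x => by ring
    exact (O_W.sub T).congr (fun x => by simp only [uN]; ring) fun _ => rfl
  -- conclusion
  refine (O_N.mul O_inv1).congr' ?_ ?_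
  · filter_upwards [ev_f1] with x hx
    obtain ⟨_, hne⟩ := hx
    simp only [yN]
    field_simp
    ring
  · exact Filter.Eventually.of_forall fun x => by simp

/-- The two-point family (17) for simple zeros is of optimal order four under
the conditions `p(0) = 1`, `p'(0) = 2`. -/
theorem two_point_simple_zero_order_four
    (f p : ℝ → ℝ) (α : ℝ)
    (hf : ContDiffAt ℝ 5 f α) (hfα : f α = 0) (hf'α : deriv f α ≠ 0)
    (hp : ContDiffAt ℝ 2 p 0) (hp0 : p 0 = 1) (hp1 : deriv p 0 = 2) :
    ∃ δ > (0 : ℝ), ∃ C > (0 : ℝ), ∀ x : ℝ, 0 < |x - α| → |x - α| < δ →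
      f x ≠ 0 → deriv f x ≠ 0 →
      let y := x - f x / deriv f x
      let u := f y / f x
      |y - p u * f y / deriv f x - α| ≤ C * |x - α| ^ 4 := by
  -- a neighborhood where f is C⁵
  obtain ⟨U, hU, hfU⟩ := hf.contDiffOn le_rfl (by simp)
  obtain ⟨ε₀, hε₀, hball⟩ := Metric.mem_nhds_iff.1 hU
  have hfB : ContDiffOn ℝ 5 f (Metric.ball α ε₀) := hfU.mono hball
  have hf1B : ContDiffOn ℝ 4 (deriv f) (Metric.ball α ε₀) :=
    hfB.deriv_of_isOpen Metric.isOpen_ball (by norm_num)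
  have hf2B : ContDiffOn ℝ 3 (deriv (deriv f)) (Metric.ball α ε₀) :=
    hf1B.deriv_of_isOpen Metric.isOpen_ball (by norm_num)
  have hf3B : ContDiffOn ℝ 2 (deriv (deriv (deriv f))) (Metric.ball α ε₀) :=
    hf2B.deriv_of_isOpen Metric.isOpen_ball (by norm_num)
  have hdf : ∀ t ∈ Metric.ball α ε₀, HasDerivAt f (deriv f t) t := fun t ht =>
    ((hfB.differentiableOn (by norm_num)).differentiableAt
      (Metric.isOpen_ball.mem_nhds ht)).hasDerivAt
  have hdf1 : ∀ t ∈ Metric.ball α ε₀, HasDerivAt (deriv f) (deriv (deriv f) t) t := fun t ht =>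
    ((hf1B.differentiableOn (by norm_num)).differentiableAt
      (Metric.isOpen_ball.mem_nhds ht)).hasDerivAt
  have hdf2 : ∀ t ∈ Metric.ball α ε₀,
      HasDerivAt (deriv (deriv f)) (deriv (deriv (deriv f)) t) t := fun t ht =>
    ((hf2B.differentiableOn (by norm_num)).differentiableAt
      (Metric.isOpen_ball.mem_nhds ht)).hasDerivAt
  -- a bound on the third derivative near α
  have hct : ContinuousAt (deriv (deriv (deriv f))) α :=
    hf3B.continuousOn.continuousAt (Metric.isOpen_ball.mem_nhds (Metric.mem_ball_self hε₀))
  set M : ℝ := |deriv (deriv (deriv f)) α| + 1 with hMdef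
  have hM0 : 0 ≤ M := by positivity
  have hev : ∀ᶠ t in 𝓝 α, |deriv (deriv (deriv f)) t| < M :=
    (hct.abs).eventually_lt_const (by rw [hMdef]; linarith)
  rw [Metric.eventually_nhds_iff] at hev
  obtain ⟨δc, hδc, hbc⟩ := hev
  set δA : ℝ := min δc ε₀ with hδAdef
  have hδA : 0 < δA := lt_min hδc hε₀
  have hmem : ∀ t : ℝ, |t - α| < δA → t ∈ Metric.ball α ε₀ := fun t ht => by
    rw [Metric.mem_ball, Real.dist_eq]
    exact lt_of_lt_of_le ht (min_le_right _ _)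
  have hbc' : ∀ t : ℝ, |t - α| < δA → |deriv (deriv (deriv f)) t| ≤ M := fun t ht =>
    (hbc (show dist t α < δc by
      rw [Real.dist_eq]; exact lt_of_lt_of_le ht (min_le_left _ _))).le
  -- Taylor chains via the mean value theorem
  have S2 : ∀ z, |z - α| < δA →
      |deriv (deriv f) z - deriv (deriv f) α| ≤ M * |z - α| ^ 1 :=
    mvt_step (g := fun t => deriv (deriv f) t - deriv (deriv f) α)
      (g' := deriv (deriv (deriv f))) 0 hM0
      (fun t ht => (hdf2 t (hmem t ht)).sub_const _)
      (fun t ht => by simpa using hbc' t ht) (by simp)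
  have S1 : ∀ z, |z - α| < δA →
      |deriv f z - deriv f α - deriv (deriv f) α * (z - α)| ≤ M * |z - α| ^ 2 :=
    mvt_step (g := fun t => deriv f t - deriv f α - deriv (deriv f) α * (t - α))
      (g' := fun t => deriv (deriv f) t - deriv (deriv f) α) 1 hM0
      (fun t ht => by
        have h1 := hdf1 t (hmem t ht)
        have h2 : HasDerivAt (fun s => deriv f α + deriv (deriv f) α * (s - α))
            (deriv (deriv f) α) t := by
          simpa using (((hasDerivAt_id t).sub_const α).const_mul
            (deriv (deriv f) α)).const_add (deriv f α)
        exact (h1.sub h2).congr_of_eventuallyEq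
          (Filter.Eventually.of_forall fun s => by simp only [Pi.sub_apply]; ring))
      (fun t ht => by simpa using S2 t ht) (by simp)
  have S0 : ∀ z, |z - α| < δA →
      |f z - deriv f α * (z - α) - deriv (deriv f) α / 2 * (z - α) ^ 2| ≤ M * |z - α| ^ 3 :=
    mvt_step (g := fun t => f t - deriv f α * (t - α) - deriv (deriv f) α / 2 * (t - α) ^ 2)
      (g' := fun t => deriv f t - deriv f α - deriv (deriv f) α * (t - α)) 2 hM0
      (fun t ht => by
        have h1 := hdf t (hmem t ht)
        have hsq : HasDerivAt (fun s : ℝ => (s - α) ^ 2) (2 * (t - α)) t := by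
          simpa using ((hasDerivAt_id t).sub_const α).fun_pow 2
        have h2 : HasDerivAt
            (fun s => deriv f α * (s - α) + deriv (deriv f) α / 2 * (s - α) ^ 2)
            (deriv f α + deriv (deriv f) α * (t - α)) t := by
          have h3 := (((hasDerivAt_id t).sub_const α).const_mul (deriv f α)).add
            (hsq.const_mul (deriv (deriv f) α / 2))
          have veq : deriv f α + deriv (deriv f) α * (t - α)
              = deriv f α * 1 + deriv (deriv f) α / 2 * (2 * (t - α)) := by ring
          rw [veq]
          exact h3
        have h4 := h1.sub h2
        have veq2 : deriv f t - (deriv f α + deriv (deriv f) α * (t - α))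
            = deriv f t - deriv f α - deriv (deriv f) α * (t - α) := by ring
        rw [veq2] at h4
        exact h4.congr_of_eventuallyEq (Filter.Eventually.of_forall fun s => by simp only [Pi.sub_apply]; ring))
      (fun t ht => S1 t ht) (by simp [hfα])
  -- the weight function p
  obtain ⟨V, hV, hpV⟩ := hp.contDiffOn le_rfl (by simp)
  obtain ⟨εp, hεp, hballp⟩ := Metric.mem_nhds_iff.1 hV
  have hpB : ContDiffOn ℝ 2 p (Metric.ball 0 εp) := hpV.mono hballp
  have hp1B : ContDiffOn ℝ 1 (deriv p) (Metric.ball 0 εp) :=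
    hpB.deriv_of_isOpen Metric.isOpen_ball (by norm_num)
  have hp2B : ContDiffOn ℝ 0 (deriv (deriv p)) (Metric.ball 0 εp) :=
    hp1B.deriv_of_isOpen Metric.isOpen_ball (by norm_num)
  have hdp : ∀ w ∈ Metric.ball (0:ℝ) εp, HasDerivAt p (deriv p w) w := fun w hw =>
    ((hpB.differentiableOn (by norm_num)).differentiableAt
      (Metric.isOpen_ball.mem_nhds hw)).hasDerivAt
  have hdp1 : ∀ w ∈ Metric.ball (0:ℝ) εp, HasDerivAt (deriv p) (deriv (deriv p) w) w :=
    fun w hw => ((hp1B.differentiableOn (by norm_num)).differentiableAt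
      (Metric.isOpen_ball.mem_nhds hw)).hasDerivAt
  have hctp : ContinuousAt (deriv (deriv p)) 0 :=
    hp2B.continuousOn.continuousAt (Metric.isOpen_ball.mem_nhds (Metric.mem_ball_self hεp))
  set Mp : ℝ := |deriv (deriv p) 0| + 1 with hMpdef
  have hMp0 : 0 ≤ Mp := by positivity
  have hevp : ∀ᶠ w in 𝓝 (0:ℝ), |deriv (deriv p) w| < Mp :=
    (hctp.abs).eventually_lt_const (by rw [hMpdef]; linarith)
  rw [Metric.eventually_nhds_iff] at hevp
  obtain ⟨δpc, hδpc, hbp⟩ := hevp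
  set δp : ℝ := min δpc εp with hδpdef
  have hδp : 0 < δp := lt_min hδpc hεp
  have hmemp : ∀ w : ℝ, |w - 0| < δp → w ∈ Metric.ball (0:ℝ) εp := fun w hw => by
    rw [Metric.mem_ball, Real.dist_eq]
    simpa using lt_of_lt_of_le hw (min_le_right _ _)
  have hbp' : ∀ w : ℝ, |w - 0| < δp → |deriv (deriv p) w| ≤ Mp := fun w hw =>
    (hbp (show dist w 0 < δpc by
      rw [Real.dist_eq]; exact lt_of_lt_of_le hw (min_le_left _ _))).le
  have P1 : ∀ w, |w - 0| < δp → |deriv p w - deriv p 0| ≤ Mp * |w - 0| ^ 1 :=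
    mvt_step (g := fun w => deriv p w - deriv p 0) (g' := deriv (deriv p)) 0 hMp0
      (fun w hw => (hdp1 w (hmemp w hw)).sub_const _)
      (fun w hw => by simpa using hbp' w hw) (by simp)
  have P0 : ∀ w, |w - 0| < δp → |p w - 1 - 2 * w| ≤ Mp * |w - 0| ^ 2 :=
    mvt_step (g := fun w => p w - 1 - 2 * w) (g' := fun w => deriv p w - deriv p 0) 1 hMp0
      (fun w hw => by
        have h1 := hdp w (hmemp w hw)
        have h2 : HasDerivAt (fun w : ℝ => 1 + 2 * w) 2 w := by
          simpa using ((hasDerivAt_id w).const_mul 2).const_add (1:ℝ)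
        have h4 := h1.sub h2
        rw [show deriv p w - 2 = deriv p w - deriv p 0 by rw [hp1]] at h4
        exact h4.congr_of_eventuallyEq (Filter.Eventually.of_forall fun s => by simp only [Pi.sub_apply]; ring))
      (fun w hw => P1 w hw) (by simp [hp0])
  have hP : ∀ w : ℝ, |w| < δp → |p w - 1 - 2 * w| ≤ Mp * |w| ^ 2 := fun w hw => by
    have := P0 w (by simpa using hw)
    simpa using this
  have hA0 : ∀ z, |z - α| < δA →
      |f z - deriv f α * (z - α) - deriv (deriv f) α / 2 * (z - α) ^ 2| ≤ M * |z - α| ^ 3 := S0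
  have hA1 : ∀ z, |z - α| < δA →
      |deriv f z - deriv f α - 2 * (deriv (deriv f) α / 2) * (z - α)| ≤ M * |z - α| ^ 2 := by
    intro z hz
    rw [show deriv f z - deriv f α - 2 * (deriv (deriv f) α / 2) * (z - α)
      = deriv f z - deriv f α - deriv (deriv f) α * (z - α) by ring]
    exact S1 z hz
  -- the asymptotic statement
  have key := aux_bigO f p α (deriv f α) (deriv (deriv f) α / 2) M δA Mp δp
    hf'α hM0 hδA hMp0 hδp hA0 hA1 hP
  obtain ⟨c, hc⟩ := key.bound
  have key2 : ∀ᶠ x in 𝓝[≠] α,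
      |yN f x - p (uN f x) * f (yN f x) / deriv f x - α| ≤ (|c| + 1) * |x - α| ^ 4 := by
    filter_upwards [hc] with x hx
    rw [Real.norm_eq_abs, Real.norm_eq_abs, abs_pow] at hx
    exact hx.trans (mul_le_mul_of_nonneg_right
      (by linarith [le_abs_self c]) (by positivity))
  rw [eventually_nhdsWithin_iff, Metric.eventually_nhds_iff] at key2
  obtain ⟨ε, hε, hkey⟩ := key2
  refine ⟨ε, hε, |c| + 1, by positivity, ?_⟩
  intro x hx0 hxε hfx hf'x
  intro y u
  have hxα : x ≠ α := fun h => by simp [h] at hx0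
  have h1 : dist x α < ε := by rw [Real.dist_eq]; exact hxε
  have h2 : x ∈ ({α}ᶜ : Set ℝ) := by simpa using hxα
  exact hkey h1 h2
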